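/- arXiv:2403.13449 — 2 statements merged into one kernel-verified Lean document; each statement's English description precedes it below -/
import Mathlib

section
/- For every bi-infinite word x over a finite alphabet and every integer n ≥ 1, the factor complexity satisfies p_x(n) ≤ n + span(x) (the inequality being trivial when span(x) = ∞). -/
open scoped ENat Classical

/-- The length-`n` factor of the bi-infinite word `x` starting at position `i`. -/
def subwordZ {A : Type*} (x : ℤ → A) (i : ℤ) (n : ℕ) : List A :=
  (List.range n).map fun j => x (i + (j : ℤ))

/-- `w` occurs in `x` at position `i`. -/
def occursAt {A : Type*} (x : ℤ → A) (w : List A) (i : ℤ) : Prop :=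
  subwordZ x i w.length = w

/-- `w` is a factor of the bi-infinite word `x`. -/
def IsFactorZ {A : Type*} (x : ℤ → A) (w : List A) : Prop :=
  ∃ i : ℤ, occursAt x w i

/-- `Γ` is a string attractor of the bi-infinite word `x`: every nonempty factor
has an occurrence crossing a position of `Γ`. -/
def IsAttractorZ {A : Type*} (x : ℤ → A) (Γ : Set ℤ) : Prop :=
  ∀ w : List A, w ≠ [] → IsFactorZ x w →
    ∃ i : ℤ, occursAt x w i ∧ ∃ p ∈ Γ, i ≤ p ∧ p < i + (w.length : ℤ)

/-- The span `sup Γ - inf Γ` of a set of integers (`⊤` when unbounded). -/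
noncomputable def setSpan (Γ : Set ℤ) : ℕ∞ :=
  ⨆ a ∈ Γ, ⨆ b ∈ Γ, ((b - a).toNat : ℕ∞)

/-- The string attractor span of a bi-infinite word. -/
noncomputable def wordSpan {A : Type*} (x : ℤ → A) : ℕ∞ :=
  ⨅ Γ ∈ {Γ : Set ℤ | IsAttractorZ x Γ}, setSpan Γ

/-- The factor complexity of a bi-infinite word. -/
noncomputable def complexityZ {A : Type*} (x : ℤ → A) (n : ℕ) : ℕ :=
  Nat.card {w : List A // w.length = n ∧ IsFactorZ x w}

/-- The shift `S^k`. -/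
def shiftZ {A : Type*} (k : ℤ) (x : ℤ → A) : ℤ → A := fun i => x (i + k)

def PositivelyPeriodicZ {A : Type*} (x : ℤ → A) : Prop :=
  ∃ (N : ℤ) (p : ℕ), 1 ≤ p ∧ ∀ n : ℤ, N ≤ n → x n = x (n + (p : ℤ))

def NegativelyPeriodicZ {A : Type*} (x : ℤ → A) : Prop :=
  ∃ (N : ℤ) (p : ℕ), 1 ≤ p ∧ ∀ n : ℤ, n ≤ N → x n = x (n - (p : ℤ))

def EventuallyPeriodicZ {A : Type*} (x : ℤ → A) : Prop :=
  PositivelyPeriodicZ x ∨ NegativelyPeriodicZ x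

def AperiodicZ {A : Type*} (x : ℤ → A) : Prop := ¬ EventuallyPeriodicZ x

def PurelyPeriodicZ {A : Type*} (x : ℤ → A) : Prop :=
  ∃ p : ℕ, 1 ≤ p ∧ ∀ n : ℤ, x n = x (n + (p : ℤ))

def LeftSpecialZ {A : Type*} (x : ℤ → A) (u : List A) : Prop :=
  ∃ a b : A, a ≠ b ∧ IsFactorZ x (a :: u) ∧ IsFactorZ x (b :: u)

def RightSpecialZ {A : Type*} (x : ℤ → A) (u : List A) : Prop :=
  ∃ a b : A, a ≠ b ∧ IsFactorZ x (u ++ [a]) ∧ IsFactorZ x (u ++ [b])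

def BispecialZ {A : Type*} (x : ℤ → A) (u : List A) : Prop :=
  LeftSpecialZ x u ∧ RightSpecialZ x u

/-- A bi-infinite word over `{0,1}` is Sturmian if it is aperiodic with complexity `n + 1`. -/
def SturmianZ (x : ℤ → Fin 2) : Prop :=
  AperiodicZ x ∧ ∀ n : ℕ, complexityZ x n = n + 1

/-- `x_{[-n, n+1]} = r_n(x) 01 l_n(x)` for all `n`. -/
def UpperCharacteristic (x : ℤ → Fin 2) : Prop :=
  SturmianZ x ∧ ∀ n : ℕ, ∃ r l : List (Fin 2),
    r.length = n ∧ RightSpecialZ x r ∧ l.length = n ∧ LeftSpecialZ x l ∧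
    subwordZ x (-(n : ℤ)) (2 * n + 2) = r ++ [0, 1] ++ l

/-- `x_{[-n, n+1]} = r_n(x) 10 l_n(x)` for all `n`. -/
def LowerCharacteristic (x : ℤ → Fin 2) : Prop :=
  SturmianZ x ∧ ∀ n : ℕ, ∃ r l : List (Fin 2),
    r.length = n ∧ RightSpecialZ x r ∧ l.length = n ∧ LeftSpecialZ x l ∧
    subwordZ x (-(n : ℤ)) (2 * n + 2) = r ++ [1, 0] ++ l

def CharacteristicSturmian (x : ℤ → Fin 2) : Prop :=
  UpperCharacteristic x ∨ LowerCharacteristic x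

def QuasiSturmianZ {A : Type*} (x : ℤ → A) : Prop :=
  AperiodicZ x ∧ ∃ (n₀ k : ℕ), 1 ≤ k ∧ ∀ n : ℕ, n₀ ≤ n → complexityZ x n = n + k

/-- Starting position in `φ(x)` of the image `φ(x_i)` (image of `x_0` starts at `0`). -/
def blockStart {A B : Type*} (φ : A → List B) (x : ℤ → A) (i : ℤ) : ℤ :=
  if 0 ≤ i then ((List.range i.toNat).map fun j => ((φ (x (j : ℤ))).length : ℤ)).sum
  else -((List.range (-i).toNat).map fun j => ((φ (x (-(j : ℤ) - 1))).length : ℤ)).sum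

/-- `y` is the image of the bi-infinite word `x` under the substitution `φ`
(with images of letters nonempty). -/
def IsSubstImage {A B : Type*} (φ : A → List B) (x : ℤ → A) (y : ℤ → B) : Prop :=
  (∀ a : A, φ a ≠ []) ∧
  ∀ i : ℤ, subwordZ y (blockStart φ x i) (φ (x i)).length = φ (x i)

/-- `φ_x(Γ)`: positions of `φ(x)` occupied by images of letters at positions in `Γ`. -/
def substSupp {A B : Type*} (φ : A → List B) (x : ℤ → A) (Γ : Set ℤ) : Set ℤ :=
  {n : ℤ | ∃ i ∈ Γ, blockStart φ x i ≤ n ∧ n < blockStart φ x i + ((φ (x i)).length : ℤ)}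

/-- `φ_x^{-1}(Γ)`: positions of letters of `x` whose image blocks in `φ(x)` meet `Γ`. -/
def substPreimage {A B : Type*} (φ : A → List B) (x : ℤ → A) (Γ : Set ℤ) : Set ℤ :=
  {i : ℤ | ∃ n ∈ Γ, blockStart φ x i ≤ n ∧ n < blockStart φ x i + ((φ (x i)).length : ℤ)}

/-- The set of occurrences of `w` in the finite word `u`. -/
def occSetF {B : Type*} (u w : List B) : Set ℕ :=
  {i : ℕ | i + w.length ≤ u.length ∧ (u.drop i).take w.length = w}

/-- `φ` is a return morphism for `w`. -/
def IsReturnMorphism {A B : Type*} (φ : A → List B) (w : List B) : Prop :=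
  w ≠ [] ∧ Function.Injective φ ∧ (∀ a : A, φ a ≠ []) ∧
  ∀ a : A, occSetF (w ++ φ a) w = {0, (φ a).length}

def listPow {A : Type*} (u : List A) : ℕ → List A
  | 0 => []
  | n + 1 => u ++ listPow u n

/-- A substitution on `{0,1}` is acyclic if `φ(0)` and `φ(1)` are not powers of one word. -/
def AcyclicSubst {A : Type*} (φ : Fin 2 → List A) : Prop :=
  ¬ ∃ (u : List A) (m n : ℕ), φ 0 = listPow u m ∧ φ 1 = listPow u n

/-- The substitution `L₀ : 0 ↦ 0, 1 ↦ 01`. -/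
def Lzero : Fin 2 → List (Fin 2) := fun a => if a = 0 then [0] else [0, 1]

/-- The substitution `L₁ : 0 ↦ 10, 1 ↦ 1`. -/
def Lone : Fin 2 → List (Fin 2) := fun a => if a = 0 then [1, 0] else [1]

/-- A finite word has period `r`. -/
def PeriodicF {A : Type*} (w : List A) (r : ℕ) : Prop :=
  ∀ i : ℕ, i + r < w.length → w[i]? = w[i + r]?

/-- `Γ` is a string attractor of the finite word `w`. -/
def IsAttractorF {A : Type*} (w : List A) (Γ : Set ℕ) : Prop :=
  ∀ u : List A, u ≠ [] → u <:+: w →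
    ∃ i : ℕ, i + u.length ≤ w.length ∧ (w.drop i).take u.length = u ∧
      ∃ p ∈ Γ, i ≤ p ∧ p < i + u.length

def RecurrentZ {A : Type*} (x : ℤ → A) : Prop :=
  ∀ w : List A, IsFactorZ x w → {i : ℤ | occursAt x w i}.Infinite

def UniformlyRecurrentZ {A : Type*} (x : ℤ → A) : Prop :=
  ∀ w : List A, IsFactorZ x w →
    ∃ n : ℕ, ∀ i : ℤ, ∃ j : ℤ, i ≤ j ∧ j + (w.length : ℤ) ≤ i + (n : ℤ) ∧ occursAt x w j

def ModuloRecurrentZ {A : Type*} (x : ℤ → A) : Prop :=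
  ∀ w : List A, IsFactorZ x w → ∀ k : ℕ, 1 ≤ k → ∀ r : ℤ,
    ∃ i : ℤ, occursAt x w i ∧ (k : ℤ) ∣ (i - r)

/-- A shift space: closed (product topology, `A` discrete) and shift-invariant. -/
def IsShiftSpace {A : Type*} (X : Set (ℤ → A)) : Prop :=
  @IsClosed _ (@Pi.topologicalSpace ℤ (fun _ => A) (fun _ => ⊥)) X ∧ shiftZ 1 '' X = X

def IsAttractorX {A : Type*} (X : Set (ℤ → A)) (Γ : Set ℤ) : Prop :=
  ∀ x ∈ X, IsAttractorZ x Γ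

def MinimalShift {A : Type*} (X : Set (ℤ → A)) : Prop :=
  IsShiftSpace X ∧ ∀ Y ⊆ X, IsShiftSpace Y → Y = ∅ ∨ Y = X

/-- The orbit closure of a bi-infinite word (product topology, `A` discrete). -/
def orbitClosureZ {A : Type*} (x : ℤ → A) : Set (ℤ → A) :=
  @closure _ (@Pi.topologicalSpace ℤ (fun _ => A) (fun _ => ⊥)) {y | ∃ k : ℤ, y = shiftZ k x}

/-!
If `Γ` is a string attractor of span `s` with least element `m`, every factor of length `n ≥ 1`
has an occurrence crossing a point of `Γ ⊆ [m, m + s]`, hence an occurrence starting in the window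
`[m - n + 1, m + s]` of `n + s` positions. A starting position determines the factor, so
`p_x(n) ≤ n + s`.
-/

theorem le_add_of_setSpan_le {Γ : Set ℤ} {s : ℕ} (hs : setSpan Γ ≤ s) {p q : ℤ}
    (hp : p ∈ Γ) (hq : q ∈ Γ) : q ≤ p + s := by
  have h : ((q - p).toNat : ℕ∞) ≤ s := by
    refine le_trans ?_ hs
    exact le_iSup₂_of_le p hp (le_iSup₂_of_le q hq le_rfl)
  have := ENat.natCast_le_natCast.mp h
  omega

theorem IsAttractorZ.nonempty {A : Type*} {x : ℤ → A} {Γ : Set ℤ} (hΓ : IsAttractorZ x Γ) :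
    Γ.Nonempty := by
  obtain ⟨-, -, p, hp, -⟩ := hΓ (subwordZ x 0 1) (by simp [subwordZ]) ⟨0, rfl⟩
  exact ⟨p, hp⟩

theorem complexityZ_le_card_of_forall_exists_occursAt {A : Type*} (x : ℤ → A) (n : ℕ)
    (S : Finset ℤ) (hS : ∀ w : List A, w.length = n → IsFactorZ x w → ∃ i ∈ S, occursAt x w i) :
    complexityZ x n ≤ S.card := by
  choose start hstart hocc using fun w : {w : List A // w.length = n ∧ IsFactorZ x w} =>
    hS w.1 w.2.1 w.2.2
  have hinj : Function.Injective fun w => (⟨start w, hstart w⟩ : S) := by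
    intro w₁ w₂ h
    have hw : ∀ w, subwordZ x (start w) n = w.1 := fun w => by
      simpa only [occursAt, w.2.1] using hocc w
    exact Subtype.ext (by rw [← hw w₁, ← hw w₂, Subtype.mk.inj h])
  simpa [complexityZ] using Nat.card_le_card_of_injective _ hinj

theorem IsAttractorZ.complexityZ_le {A : Type*} {x : ℤ → A} {Γ : Set ℤ}
    (hΓ : IsAttractorZ x Γ) {n s : ℕ} (hn : 1 ≤ n) (hs : setSpan Γ ≤ s) :
    complexityZ x n ≤ n + s := by
  obtain ⟨p₀, hp₀⟩ := hΓ.nonempty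
  obtain ⟨m, hm, hmin⟩ := Int.exists_least_of_bdd (P := (· ∈ Γ))
    ⟨p₀ - s, fun q hq => by have := le_add_of_setSpan_le hs hq hp₀; omega⟩ ⟨p₀, hp₀⟩
  calc complexityZ x n ≤ (Finset.Icc (m - n + 1) (m + s)).card := by
        refine complexityZ_le_card_of_forall_exists_occursAt x n _ fun w hw hfac => ?_
        obtain ⟨i, hocc, p, hp, hip, hpi⟩ :=
          hΓ w (List.ne_nil_of_length_pos (by omega)) hfac
        have hmp : m ≤ p := hmin p hp
        have hpm : p ≤ m + s := le_add_of_setSpan_le hs hm hp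
        exact ⟨i, Finset.mem_Icc.mpr ⟨by omega, by omega⟩, hocc⟩
    _ = n + s := by rw [Int.card_Icc]; omega

theorem factor_complexity_le_span_general {A : Type*} (x : ℤ → A) (n : ℕ) (hn : 1 ≤ n) :
    (complexityZ x n : ℕ∞) ≤ (n : ℕ∞) + wordSpan x := by
  rw [wordSpan, ENat.add_iInf₂]
  refine le_iInf₂ fun Γ hΓ => ?_
  induction h : setSpan Γ using ENat.recTopCoe with
  | top => simp
  | coe s => exact_mod_cast hΓ.complexityZ_le hn h.le

/-- For every bi-infinite word over a finite alphabet and every `n ≥ 1`,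
the factor complexity satisfies `p_x(n) ≤ n + span(x)`. -/
theorem factor_complexity_le_span {A : Type*} [Fintype A] (x : ℤ → A) (n : ℕ) (hn : 1 ≤ n) :
    (complexityZ x n : ℕ∞) ≤ (n : ℕ∞) + wordSpan x :=
  factor_complexity_le_span_general x n hn
end

section
/- Let x ∈ {0,1}^ℤ be a bi-infinite word of factor complexity p_x(n) = n + 1 for all n. Then the set {0, 1} is a string attractor of x if and only if x_{[-n, n+1]} = r_n(x) 01 l_n(x) for all n ≥ 0, or x_{[-n, n+1]} = r_n(x) 10 l_n(x) for all n ≥ 0. -/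
open scoped ENat Classical

/-!
An occurrence of length `k` starting at `i` crosses `0` or `1` iff `1 - k ≤ i ≤ 1`. There are
`k + 1` such starts and `k + 1` factors of length `k`, so `{0, 1}` is an attractor iff for every
`k` the windows `x_{[i, i+k-1]}`, `1 - k ≤ i ≤ 1`, are pairwise distinct.

If they are, the occurrences of `ua` and `ub` for a right special `u` of length `n` can be taken
among these windows of length `n + 1`; distinctness of the length-`n` windows then forces one of
them to start at `-n`, so `u = x_{[-n,-1]}`. Symmetrically the left special factor is
`x_{[2, n+1]}`, and `x_0 ≠ x_1` gives the two possible middles.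

Conversely, distinctness passes from length `k` to `k + 1` by looking at prefixes and suffixes,
except for the windows starting at `-k` and `1`. If those agreed, the `k + 1` windows of length
`k + 1` starting in `[-k, 0]`, together with `r_k c` and `c' l_k` for `c ≠ x_0`, `c' ≠ x_1`,
would be `k + 3` distinct factors of length `k + 1`.
-/

section

variable {A : Type*} (x : ℤ → A)

-- The definition of `subwordZ` elaborates through the coercion `List ℕ → List ℤ`.
theorem subwordZ_eq_map (i : ℤ) (n : ℕ) :
    subwordZ x i n = (List.range n).map fun j : ℕ => x (i + j) := by
  simp [subwordZ, ← List.map_eq_flatMap, Function.comp_def]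

@[simp]
theorem length_subwordZ (i : ℤ) (n : ℕ) : (subwordZ x i n).length = n := by
  simp [subwordZ_eq_map]

@[simp]
theorem subwordZ_zero (i : ℤ) : subwordZ x i 0 = [] := rfl

theorem subwordZ_succ (i : ℤ) (n : ℕ) :
    subwordZ x i (n + 1) = subwordZ x i n ++ [x (i + n)] := by
  simp [subwordZ_eq_map, List.range_succ]

theorem subwordZ_succ' (i : ℤ) (n : ℕ) :
    subwordZ x i (n + 1) = x i :: subwordZ x (i + 1) n := by
  simp only [subwordZ_eq_map, List.range_succ_eq_map, List.map_cons, List.map_map]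
  congr 2
  · simp
  · ext j; simp [Function.comp, add_assoc, add_comm (1 : ℤ)]

@[simp]
theorem subwordZ_one (i : ℤ) : subwordZ x i 1 = [x i] := by
  simp [subwordZ_succ']

theorem subwordZ_add (i : ℤ) (m n : ℕ) :
    subwordZ x i (m + n) = subwordZ x i m ++ subwordZ x (i + m) n := by
  induction n with
  | zero => simp
  | succ n ih =>
    rw [← add_assoc, subwordZ_succ, ih, subwordZ_succ, List.append_assoc]
    push_cast
    ring_nf

theorem subwordZ_succ_inj {i j : ℤ} {n : ℕ} :
    subwordZ x i (n + 1) = subwordZ x j (n + 1) ↔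
      subwordZ x i n = subwordZ x j n ∧ x (i + n) = x (j + n) := by
  rw [subwordZ_succ, subwordZ_succ, List.append_singleton_inj]

theorem subwordZ_succ_inj' {i j : ℤ} {n : ℕ} :
    subwordZ x i (n + 1) = subwordZ x j (n + 1) ↔
      x i = x j ∧ subwordZ x (i + 1) n = subwordZ x (j + 1) n := by
  rw [subwordZ_succ', subwordZ_succ', List.cons.injEq]

theorem subwordZ_neg_two_mul_add_two (n : ℕ) :
    subwordZ x (-n) (2 * n + 2) = subwordZ x (-n) n ++ [x 0, x 1] ++ subwordZ x 2 n := by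
  rw [show 2 * n + 2 = n + (2 + n) by ring, subwordZ_add, subwordZ_add, neg_add_cancel,
    List.append_assoc]
  simp [subwordZ_succ']

theorem isFactorZ_subwordZ (i : ℤ) (n : ℕ) : IsFactorZ x (subwordZ x i n) :=
  ⟨i, by simp [occursAt]⟩

def factorsZ (n : ℕ) : Set (List A) := {w | w.length = n ∧ IsFactorZ x w}

theorem subwordZ_mem_factorsZ (i : ℤ) (n : ℕ) : subwordZ x i n ∈ factorsZ x n :=
  ⟨length_subwordZ x i n, isFactorZ_subwordZ x i n⟩

theorem mem_factorsZ {w : List A} {n : ℕ} : w ∈ factorsZ x n ↔ ∃ i, subwordZ x i n = w := by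
  constructor
  · rintro ⟨rfl, i, hi⟩
    exact ⟨i, hi⟩
  · rintro ⟨i, rfl⟩
    exact subwordZ_mem_factorsZ x i n

theorem complexityZ_eq_ncard (n : ℕ) : complexityZ x n = (factorsZ x n).ncard :=
  Nat.card_coe_set_eq _

def crossingStarts (k : ℕ) : Set ℤ := Set.Icc (1 - (k : ℤ)) 1

theorem mem_crossingStarts {i : ℤ} {k : ℕ} : i ∈ crossingStarts k ↔ 1 - (k : ℤ) ≤ i ∧ i ≤ 1 :=
  Iff.rfl

theorem isAttractorZ_zero_one_iff :
    IsAttractorZ x {0, 1} ↔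
      ∀ k : ℕ, Set.SurjOn (subwordZ x · k) (crossingStarts k) (factorsZ x k) := by
  constructor
  · rintro hx k w ⟨rfl, hw⟩
    rcases eq_or_ne w [] with rfl | hne
    · exact ⟨1, by simp [mem_crossingStarts], rfl⟩
    obtain ⟨i, hi, p, hp, hip, hpi⟩ := hx w hne hw
    refine ⟨i, mem_crossingStarts.2 ⟨?_, ?_⟩, hi⟩ <;>
      rcases hp with rfl | rfl <;> omega
  · intro hx w hne hw
    obtain ⟨i, hi, hiw⟩ := hx w.length ⟨rfl, hw⟩
    have hlen : 0 < w.length := List.length_pos_iff.2 hne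
    rw [mem_crossingStarts] at hi
    refine ⟨i, hiw, if i ≤ 0 then 0 else 1, by split_ifs <;> simp, ?_⟩
    split_ifs <;> omega

theorem injOn_iff_surjOn_crossingStarts {k : ℕ} (hk : complexityZ x k = k + 1) :
    Set.InjOn (subwordZ x · k) (crossingStarts k) ↔
      Set.SurjOn (subwordZ x · k) (crossingStarts k) (factorsZ x k) := by
  rw [complexityZ_eq_ncard] at hk
  have hfin : (factorsZ x k).Finite := Set.finite_of_ncard_ne_zero (by omega)
  have hmaps : Set.MapsTo (subwordZ x · k) ↑(Finset.Icc (1 - (k : ℤ)) 1) ↑hfin.toFinset := by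
    intro i _
    simpa using subwordZ_mem_factorsZ x i k
  have hcard : (Finset.Icc (1 - (k : ℤ)) 1).card = hfin.toFinset.card := by
    rw [Int.card_Icc, ← Set.ncard_eq_toFinset_card _ hfin, hk]
    omega
  have hstarts : crossingStarts k = ↑(Finset.Icc (1 - (k : ℤ)) 1) := by
    simp [crossingStarts]
  rw [hstarts, ← hfin.coe_toFinset]
  exact ⟨fun h => Finset.surjOn_of_injOn_of_card_le _ hmaps h hcard.ge,
    fun h => Finset.injOn_of_surjOn_of_card_le _ hmaps h hcard.le⟩

theorem card_le_complexityZ {n : ℕ} (hn : complexityZ x n ≠ 0) {s : Finset (List A)}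
    (hs : ∀ w ∈ s, w ∈ factorsZ x n) : s.card ≤ complexityZ x n := by
  rw [complexityZ_eq_ncard] at hn ⊢
  rw [← Set.ncard_coe_finset]
  exact Set.ncard_le_ncard hs (Set.finite_of_ncard_ne_zero hn)

theorem exists_rightSpecialZ {n : ℕ} (hn : complexityZ x n ≠ 0)
    (hlt : complexityZ x n < complexityZ x (n + 1)) :
    ∃ r : List A, r.length = n ∧ RightSpecialZ x r := by
  simp only [complexityZ_eq_ncard] at hn hlt
  obtain ⟨_, hw, _, hw', hne, heq⟩ :=
    Set.exists_ne_map_eq_of_ncard_lt_of_maps_to hlt (f := List.dropLast)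
      (fun w hw => by
        obtain ⟨i, rfl⟩ := (mem_factorsZ x).1 hw
        simpa [subwordZ_succ] using subwordZ_mem_factorsZ x i n)
      (Set.finite_of_ncard_ne_zero hn)
  obtain ⟨i, rfl⟩ := (mem_factorsZ x).1 hw
  obtain ⟨j, rfl⟩ := (mem_factorsZ x).1 hw'
  simp only [ne_eq, subwordZ_succ_inj, not_and] at hne
  simp only [subwordZ_succ, List.dropLast_concat] at heq
  refine ⟨subwordZ x i n, length_subwordZ x i n, x (i + n), x (j + n), hne heq, ?_, ?_⟩
  · rw [← subwordZ_succ]; exact isFactorZ_subwordZ x i (n + 1)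
  · rw [heq, ← subwordZ_succ]; exact isFactorZ_subwordZ x j (n + 1)

theorem exists_leftSpecialZ {n : ℕ} (hn : complexityZ x n ≠ 0)
    (hlt : complexityZ x n < complexityZ x (n + 1)) :
    ∃ l : List A, l.length = n ∧ LeftSpecialZ x l := by
  simp only [complexityZ_eq_ncard] at hn hlt
  obtain ⟨_, hw, _, hw', hne, heq⟩ :=
    Set.exists_ne_map_eq_of_ncard_lt_of_maps_to hlt (f := List.tail)
      (fun w hw => by
        obtain ⟨i, rfl⟩ := (mem_factorsZ x).1 hw
        simpa [subwordZ_succ'] using subwordZ_mem_factorsZ x (i + 1) n)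
      (Set.finite_of_ncard_ne_zero hn)
  obtain ⟨i, rfl⟩ := (mem_factorsZ x).1 hw
  obtain ⟨j, rfl⟩ := (mem_factorsZ x).1 hw'
  simp only [ne_eq, subwordZ_succ_inj', not_and'] at hne
  simp only [subwordZ_succ', List.tail_cons] at heq
  refine ⟨subwordZ x (i + 1) n, length_subwordZ x _ n, x i, x j, hne heq, ?_, ?_⟩
  · rw [← subwordZ_succ']; exact isFactorZ_subwordZ x i (n + 1)
  · rw [heq, ← subwordZ_succ']; exact isFactorZ_subwordZ x j (n + 1)

theorem RightSpecialZ.exists_ne {x : ℤ → A} {r : List A} (h : RightSpecialZ x r) (a : A) :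
    ∃ c ≠ a, IsFactorZ x (r ++ [c]) := by
  obtain ⟨b, b', hbb', hb, hb'⟩ := h
  by_cases hba : b = a
  · exact ⟨b', fun h => hbb' (hba.trans h.symm), hb'⟩
  · exact ⟨b, hba, hb⟩

theorem LeftSpecialZ.exists_ne {x : ℤ → A} {l : List A} (h : LeftSpecialZ x l) (a : A) :
    ∃ c ≠ a, IsFactorZ x (c :: l) := by
  obtain ⟨b, b', hbb', hb, hb'⟩ := h
  by_cases hba : b = a
  · exact ⟨b', fun h => hbb' (hba.trans h.symm), hb'⟩
  · exact ⟨b, hba, hb⟩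

theorem eq_subwordZ_of_rightSpecialZ {n : ℕ}
    (hinj : Set.InjOn (subwordZ x · n) (crossingStarts n))
    (hsurj : Set.SurjOn (subwordZ x · (n + 1)) (crossingStarts (n + 1)) (factorsZ x (n + 1)))
    {r : List A} (hr : r.length = n) (hrs : RightSpecialZ x r) : r = subwordZ x (-n) n := by
  obtain ⟨a, b, hab, ha, hb⟩ := hrs
  obtain ⟨i, hi, hia⟩ := hsurj ⟨by simp [hr], ha⟩
  obtain ⟨j, hj, hjb⟩ := hsurj ⟨by simp [hr], hb⟩
  simp only [subwordZ_succ, List.append_singleton_inj] at hia hjb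
  rw [mem_crossingStarts] at hi hj
  have hij : i ≠ j := by rintro rfl; exact hab (hia.2.symm.trans hjb.2)
  by_cases hi' : i = -n
  · rw [← hia.1, hi']
  by_cases hj' : j = -n
  · rw [← hjb.1, hj']
  exact absurd (hinj (mem_crossingStarts.2 ⟨by omega, hi.2⟩)
    (mem_crossingStarts.2 ⟨by omega, hj.2⟩) (hia.1.trans hjb.1.symm)) hij

theorem eq_subwordZ_of_leftSpecialZ {n : ℕ}
    (hinj : Set.InjOn (subwordZ x · n) (crossingStarts n))
    (hsurj : Set.SurjOn (subwordZ x · (n + 1)) (crossingStarts (n + 1)) (factorsZ x (n + 1)))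
    {l : List A} (hl : l.length = n) (hls : LeftSpecialZ x l) : l = subwordZ x 2 n := by
  obtain ⟨a, b, hab, ha, hb⟩ := hls
  obtain ⟨i, hi, hia⟩ := hsurj ⟨by simp [hl], ha⟩
  obtain ⟨j, hj, hjb⟩ := hsurj ⟨by simp [hl], hb⟩
  simp only [subwordZ_succ', List.cons.injEq] at hia hjb
  rw [mem_crossingStarts] at hi hj
  have hij : i ≠ j := by rintro rfl; exact hab (hia.1.symm.trans hjb.1)
  by_cases hi' : i = 1
  · rw [← hia.2, hi']; norm_num
  by_cases hj' : j = 1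
  · rw [← hjb.2, hj']; norm_num
  have := hinj (mem_crossingStarts.2 ⟨by omega, by omega⟩)
    (mem_crossingStarts.2 ⟨by omega, by omega⟩) (hia.2.trans hjb.2.symm)
  omega

theorem injOn_subwordZ_succ {s : Set ℤ} {k : ℕ} (h : Set.InjOn (subwordZ x · k) s) :
    Set.InjOn (subwordZ x · (k + 1)) s :=
  fun _ hi _ hj hij => h hi hj ((subwordZ_succ_inj x).1 hij).1

theorem injOn_subwordZ_succ_preimage {s : Set ℤ} {k : ℕ} (h : Set.InjOn (subwordZ x · k) s) :
    Set.InjOn (subwordZ x · (k + 1)) ((· + 1) ⁻¹' s) :=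
  fun _ hi _ hj hij => add_right_cancel (h hi hj ((subwordZ_succ_inj' x).1 hij).2)

theorem injOn_crossingStarts_succ {k : ℕ}
    (h : Set.InjOn (subwordZ x · k) (crossingStarts k))
    (hper : subwordZ x (-k) (k + 1) ≠ subwordZ x 1 (k + 1)) :
    Set.InjOn (subwordZ x · (k + 1)) (crossingStarts (k + 1)) := by
  have key : ∀ i ∈ crossingStarts (k + 1), ∀ j ∈ crossingStarts (k + 1), i < j →
      subwordZ x i (k + 1) ≠ subwordZ x j (k + 1) := by
    intro i hi j hj hij heq
    rw [mem_crossingStarts] at hi hj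
    push_cast at hi hj
    by_cases hi' : 1 - (k : ℤ) ≤ i
    · exact hij.ne (injOn_subwordZ_succ x h (mem_crossingStarts.2 ⟨hi', by omega⟩)
        (mem_crossingStarts.2 ⟨by omega, hj.2⟩) heq)
    by_cases hj' : j ≤ 0
    · exact hij.ne (injOn_subwordZ_succ_preimage x h
        (mem_crossingStarts.2 ⟨by omega, by omega⟩ : i + 1 ∈ crossingStarts k)
        (mem_crossingStarts.2 ⟨by omega, by omega⟩ : j + 1 ∈ crossingStarts k) heq)
    obtain ⟨rfl, rfl⟩ : i = -k ∧ j = 1 := by omega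
    exact hper heq
  intro i hi j hj hij
  by_contra hne
  rcases lt_or_gt_of_ne hne with hlt | hlt
  · exact key i hi j hj hlt hij
  · exact key j hj i hi hlt hij.symm

theorem subwordZ_neg_ne_subwordZ_one {k : ℕ} (hk : k ≠ 0)
    (hinj : Set.InjOn (subwordZ x · k) (crossingStarts k))
    (hr : RightSpecialZ x (subwordZ x (-k) k)) (hl : LeftSpecialZ x (subwordZ x 2 k))
    (hcomp : complexityZ x (k + 1) = k + 2) :
    subwordZ x (-k) (k + 1) ≠ subwordZ x 1 (k + 1) := by
  intro hper
  have hpre : subwordZ x (-k) k = subwordZ x 1 k := ((subwordZ_succ_inj x).1 hper).1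
  obtain ⟨hhead, hsuf⟩ := (subwordZ_succ_inj' x).1 hper
  rw [one_add_one_eq_two] at hsuf
  have mem : ∀ i : ℤ, 1 - (k : ℤ) ≤ i → i ≤ 1 → i ∈ crossingStarts k :=
    fun i h₁ h₂ => mem_crossingStarts.2 ⟨h₁, h₂⟩
  obtain ⟨c, hc, hfc⟩ := hr.exists_ne (x 0)
  obtain ⟨c', hc', hfc'⟩ := hl.exists_ne (x 1)
  set S := (Finset.Icc (-(k : ℤ)) 0).image (subwordZ x · (k + 1))
  have hS : S.card = k + 1 := by
    rw [Finset.card_image_of_injOn, Int.card_Icc]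
    · omega
    refine (injOn_subwordZ_succ_preimage x hinj).mono fun i hi => ?_
    rw [Finset.coe_Icc, Set.mem_Icc] at hi
    exact mem (i + 1) (by omega) (by omega)
  have hcS : subwordZ x (-k) k ++ [c] ∉ S := by
    simp only [S, Finset.mem_image, Finset.mem_Icc, not_exists, not_and]
    intro i hi heq
    rw [subwordZ_succ, List.append_singleton_inj, hpre] at heq
    by_cases hik : i = -k
    · subst hik
      exact hc (by simpa using heq.2.symm)
    · have := hinj (mem i (by omega) (by omega)) (mem 1 (by omega) le_rfl) heq.1
      omega
  have hc'S : c' :: subwordZ x 2 k ∉ S := by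
    simp only [S, Finset.mem_image, Finset.mem_Icc, not_exists, not_and]
    intro i hi heq
    rw [subwordZ_succ', List.cons.injEq] at heq
    have : i + 1 = -k + 1 := hinj (mem (i + 1) (by omega) (by omega))
      (mem (-k + 1) (by omega) (by omega)) (heq.2.trans hsuf.symm)
    obtain rfl : i = -k := by omega
    exact hc' (heq.1.symm.trans hhead)
  have hne : subwordZ x (-k) k ++ [c] ≠ c' :: subwordZ x 2 k := by
    obtain ⟨m, rfl⟩ := Nat.exists_eq_add_one_of_ne_zero hk
    rw [subwordZ_succ', List.cons_append, Ne, List.cons.injEq]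
    exact fun h => hc' (h.1.symm.trans hhead)
  have hcard := card_le_complexityZ x (n := k + 1) (by omega)
    (s := insert (subwordZ x (-k) k ++ [c]) (insert (c' :: subwordZ x 2 k) S)) (by
      simp only [Finset.mem_insert, S, Finset.mem_image]
      rintro w (rfl | rfl | ⟨i, -, rfl⟩)
      · exact ⟨by simp, hfc⟩
      · exact ⟨by simp, hfc'⟩
      · exact subwordZ_mem_factorsZ x i (k + 1))
  rw [Finset.card_insert_of_notMem (by simp [hne, hcS]), Finset.card_insert_of_notMem hc'S, hS,
    hcomp] at hcard
  omega

theorem injOn_crossingStarts_of_specialZ (hcomp : ∀ n, complexityZ x n = n + 1)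
    (hr : ∀ n : ℕ, RightSpecialZ x (subwordZ x (-n) n))
    (hl : ∀ n : ℕ, LeftSpecialZ x (subwordZ x 2 n)) (h01 : x 0 ≠ x 1) (k : ℕ) :
    Set.InjOn (subwordZ x · k) (crossingStarts k) := by
  induction k with
  | zero =>
    refine Set.Subsingleton.injOn ?_ _
    simp [crossingStarts]
  | succ k ih =>
    refine injOn_crossingStarts_succ x ih ?_
    rcases eq_or_ne k 0 with rfl | hk
    · simpa using h01
    · exact subwordZ_neg_ne_subwordZ_one x hk ih (hr k) (hl k) (hcomp (k + 1))

theorem specialZ_of_injOn_crossingStarts (hcomp : ∀ n, complexityZ x n = n + 1)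
    (h : ∀ k, Set.InjOn (subwordZ x · k) (crossingStarts k)) :
    (∀ n : ℕ, RightSpecialZ x (subwordZ x (-n) n)) ∧
      (∀ n : ℕ, LeftSpecialZ x (subwordZ x 2 n)) ∧ x 0 ≠ x 1 := by
  have hsurj k := (injOn_iff_surjOn_crossingStarts x (hcomp k)).1 (h k)
  have hne n : complexityZ x n ≠ 0 := by simp [hcomp]
  have hlt n : complexityZ x n < complexityZ x (n + 1) := by simp [hcomp]
  refine ⟨fun n => ?_, fun n => ?_, fun h01 => ?_⟩
  · obtain ⟨r, hr, hrs⟩ := exists_rightSpecialZ x (hne n) (hlt n)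
    rwa [← eq_subwordZ_of_rightSpecialZ x (h n) (hsurj (n + 1)) hr hrs]
  · obtain ⟨l, hl, hls⟩ := exists_leftSpecialZ x (hne n) (hlt n)
    rwa [← eq_subwordZ_of_leftSpecialZ x (h n) (hsurj (n + 1)) hl hls]
  · have := h 1 (mem_crossingStarts.2 ⟨by norm_num, by norm_num⟩)
      (mem_crossingStarts.2 ⟨by norm_num, le_rfl⟩) (by simp [h01] : subwordZ x 0 1 = subwordZ x 1 1)
    norm_num at this

theorem forall_injOn_crossingStarts_iff (hcomp : ∀ n, complexityZ x n = n + 1) :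
    (∀ k, Set.InjOn (subwordZ x · k) (crossingStarts k)) ↔
      (∀ n : ℕ, RightSpecialZ x (subwordZ x (-n) n)) ∧
        (∀ n : ℕ, LeftSpecialZ x (subwordZ x 2 n)) ∧ x 0 ≠ x 1 :=
  ⟨specialZ_of_injOn_crossingStarts x hcomp,
    fun ⟨hr, hl, h01⟩ => injOn_crossingStarts_of_specialZ x hcomp hr hl h01⟩

theorem exists_specialZ_decomposition_iff (c₁ c₂ : A) (n : ℕ) :
    (∃ r l : List A, r.length = n ∧ RightSpecialZ x r ∧ l.length = n ∧ LeftSpecialZ x l ∧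
        subwordZ x (-(n : ℤ)) (2 * n + 2) = r ++ [c₁, c₂] ++ l) ↔
      RightSpecialZ x (subwordZ x (-n) n) ∧ LeftSpecialZ x (subwordZ x 2 n) ∧
        x 0 = c₁ ∧ x 1 = c₂ := by
  rw [subwordZ_neg_two_mul_add_two]
  constructor
  · rintro ⟨r, l, hr, hrs, -, hls, h⟩
    obtain ⟨h', rfl⟩ := List.append_inj h (by simp [hr])
    obtain ⟨rfl, h01⟩ := List.append_inj h' (by simp [hr])
    simp only [List.cons.injEq, and_true] at h01
    exact ⟨hrs, hls, h01⟩
  · rintro ⟨hrs, hls, rfl, rfl⟩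
    exact ⟨_, _, length_subwordZ x _ n, hrs, length_subwordZ x _ n, hls, rfl⟩

end

/-- For `x ∈ {0,1}^ℤ` with `p_x(n) = n + 1` for all `n`, the set `{0,1}` is a
string attractor of `x` iff `x_{[-n,n+1]} = r_n(x) 01 l_n(x)` for all `n`, or
`x_{[-n,n+1]} = r_n(x) 10 l_n(x)` for all `n`. -/
theorem attractor_zero_one_iff_characteristic_form (x : ℤ → Fin 2)
    (hcomp : ∀ n : ℕ, complexityZ x n = n + 1) :
    IsAttractorZ x {0, 1} ↔
      ((∀ n : ℕ, ∃ r l : List (Fin 2),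
          r.length = n ∧ RightSpecialZ x r ∧ l.length = n ∧ LeftSpecialZ x l ∧
          subwordZ x (-(n : ℤ)) (2 * n + 2) = r ++ [0, 1] ++ l) ∨
       (∀ n : ℕ, ∃ r l : List (Fin 2),
          r.length = n ∧ RightSpecialZ x r ∧ l.length = n ∧ LeftSpecialZ x l ∧
          subwordZ x (-(n : ℤ)) (2 * n + 2) = r ++ [1, 0] ++ l)) := by
  have hletters : x 0 ≠ x 1 ↔ (x 0 = 0 ∧ x 1 = 1) ∨ (x 0 = 1 ∧ x 1 = 0) := by
    generalize x 0 = a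
    generalize x 1 = b
    revert a b
    decide
  rw [isAttractorZ_zero_one_iff,
    ← forall_congr' fun k => injOn_iff_surjOn_crossingStarts x (hcomp k),
    forall_injOn_crossingStarts_iff x hcomp, hletters]
  simp only [exists_specialZ_decomposition_iff, forall_and, forall_const]
  tauto
end
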